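/- arXiv:1805.08013 — 4 statements merged into one kernel-verified Lean document; each statement's English description precedes it below -/
import Mathlib

section
/- In a rooted tree on n vertices (edges directed toward the root), where I(v) denotes the number of vertices in the subtree rooted at v, the sum over all non-root vertices v of I(v)^2 * (I(parent(v)) - I(v)) is maximized (over all trees on n vertices) exactly when the tree is a path. -/
open Finset
open scoped Classical

/-- A rooted tree on `n` vertices: every vertex has a parent, the root is a fixed
point of the parent map, and every vertex reaches the root by iterating `parent`.
Edges are directed from a non-root vertex to its parent. -/
structure ParentTree (n : ℕ) where
  parent : Fin n → Fin n
  root : Fin n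
  root_fixed : parent root = root
  reaches : ∀ v, ∃ k, parent^[k] v = root

namespace ParentTree

variable {n : ℕ}

/-- `T.Anc v u` : `v` is an ancestor of `u` (possibly `v = u`). -/
def Anc (T : ParentTree n) (v u : Fin n) : Prop := ∃ k, T.parent^[k] u = v

/-- The size of the subtree rooted at `v` (including `v`). -/
noncomputable def subSize (T : ParentTree n) (v : Fin n) : ℕ :=
  (Finset.univ.filter fun u => T.Anc v u).card

/-- The children of `v` (its in-neighbours). -/
noncomputable def children (T : ParentTree n) (v : Fin n) : Finset (Fin n) :=
  Finset.univ.filter fun u => T.parent u = v ∧ u ≠ v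

/-- `v` is the lowest common ancestor of `x` and `y`. -/
def IsLCA (T : ParentTree n) (v x y : Fin n) : Prop :=
  T.Anc v x ∧ T.Anc v y ∧ ∀ w, T.Anc w x → T.Anc w y → T.Anc w v

/-- The quantity `f(T) = ∑_{v ≠ root} I(v)² (I(parent v) - I(v))`. -/
noncomputable def fval (T : ParentTree n) : ℝ :=
  ∑ v ∈ Finset.univ.filter (· ≠ T.root),
    (T.subSize v : ℝ) ^ 2 * ((T.subSize (T.parent v) : ℝ) - (T.subSize v : ℝ))

/-- A rooted tree is a path if every vertex has at most one child. -/
def IsPathTree (T : ParentTree n) : Prop :=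
  ∀ v w, v ≠ T.root → w ≠ T.root → T.parent v = T.parent w → v = w

end ParentTree

namespace ParentTree

variable {n : ℕ}

variable (T : ParentTree n)

lemma anc_refl (v : Fin n) : T.Anc v v := ⟨0, rfl⟩

lemma anc_trans {w v u : Fin n} (h1 : T.Anc v u) (h2 : T.Anc w v) : T.Anc w u := by
  obtain ⟨k, hk⟩ := h1
  obtain ⟨j, hj⟩ := h2
  exact ⟨j + k, by rw [Function.iterate_add_apply, hk, hj]⟩

lemma iterate_root (k : ℕ) : T.parent^[k] T.root = T.root := by
  induction k with
  | zero => rfl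
  | succ k ih => rw [Function.iterate_succ_apply', ih, T.root_fixed]

lemma iterate_mul_fixed {u : Fin n} {N : ℕ} (h : T.parent^[N] u = u) (m : ℕ) :
    T.parent^[N * m] u = u := by
  induction m with
  | zero => simp
  | succ m ih =>
    rw [Nat.mul_succ, Function.iterate_add_apply, h, ih]

lemma anc_antisymm {v u : Fin n} (h1 : T.Anc v u) (h2 : T.Anc u v) : u = v := by
  obtain ⟨k, hk⟩ := h1
  obtain ⟨j, hj⟩ := h2
  have hcyc : T.parent^[j + k] u = u := by
    rw [Function.iterate_add_apply, hk, hj]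
  rcases Nat.eq_zero_or_pos (j + k) with h0 | hpos
  · have : k = 0 := by omega
    subst this; simpa using hk
  · obtain ⟨m, hm⟩ := T.reaches u
    have huroot : u = T.root := by
      have h1' : T.parent^[(j + k) * (m + 1)] u = u := T.iterate_mul_fixed hcyc (m + 1)
      have hge : m ≤ (j + k) * (m + 1) := by nlinarith
      obtain ⟨d, hd⟩ := Nat.exists_eq_add_of_le hge
      rw [hd, add_comm, Function.iterate_add_apply, hm, T.iterate_root] at h1'
      exact h1'.symm
    have : v = T.root := by rw [← hk, huroot, T.iterate_root]
    rw [huroot, this]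

noncomputable def Sub (v : Fin n) : Finset (Fin n) :=
  Finset.univ.filter fun u => T.Anc v u

lemma mem_sub {v u : Fin n} : u ∈ T.Sub v ↔ T.Anc v u := by simp [Sub]

lemma subSize_eq_card (v : Fin n) : T.subSize v = (T.Sub v).card := rfl

lemma self_mem_sub (v : Fin n) : v ∈ T.Sub v := T.mem_sub.2 (T.anc_refl v)

lemma sub_subset {v u : Fin n} (h : T.Anc v u) : T.Sub u ⊆ T.Sub v := fun x hx =>
  T.mem_sub.2 (T.anc_trans (T.mem_sub.1 hx) h)

lemma anc_comparable {u v x : Fin n} (hu : T.Anc u x) (hv : T.Anc v x) :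
    T.Anc u v ∨ T.Anc v u := by
  obtain ⟨a, ha⟩ := hu
  obtain ⟨b, hb⟩ := hv
  rcases le_total a b with h | h
  · right
    obtain ⟨d, hd⟩ := Nat.exists_eq_add_of_le h
    exact ⟨d, by rw [← ha, ← Function.iterate_add_apply, show d + a = b by omega, hb]⟩
  · left
    obtain ⟨d, hd⟩ := Nat.exists_eq_add_of_le h
    exact ⟨d, by rw [← hb, ← Function.iterate_add_apply, show d + b = a by omega, ha]⟩

lemma mem_children {c v : Fin n} : c ∈ T.children v ↔ T.parent c = v ∧ c ≠ v := by
  simp [children]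

lemma anc_of_child {c v : Fin n} (h : c ∈ T.children v) : T.Anc v c :=
  ⟨1, by simp [(T.mem_children.1 h).1]⟩

lemma not_mem_sub_child {c v : Fin n} (h : c ∈ T.children v) : v ∉ T.Sub c := by
  intro hv
  exact (T.mem_children.1 h).2 (T.anc_antisymm (T.anc_of_child h) (T.mem_sub.1 hv))

lemma erase_sub_eq (v : Fin n) :
    (T.Sub v).erase v = (T.children v).biUnion T.Sub := by
  ext u
  simp only [Finset.mem_erase, Finset.mem_biUnion]
  constructor
  · rintro ⟨hne, hu⟩
    have hanc : T.Anc v u := T.mem_sub.1 hu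
    have hk : ∃ k, T.parent^[k] u = v := hanc
    set k0 := Nat.find hk with hk0
    have hspec : T.parent^[k0] u = v := Nat.find_spec hk
    have hk0ne : k0 ≠ 0 := by
      intro h0
      rw [h0] at hspec
      exact hne (by simpa using hspec)
    refine ⟨T.parent^[k0 - 1] u, ?_, ?_⟩
    · rw [T.mem_children]
      constructor
      · have h2 : T.parent^[k0 - 1 + 1] u = T.parent (T.parent^[k0 - 1] u) :=
          Function.iterate_succ_apply' _ _ _
        rw [show k0 - 1 + 1 = k0 by omega] at h2
        rw [← h2, hspec]
      · intro hc
        exact Nat.find_min hk (show k0 - 1 < k0 by omega) hc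
    · exact T.mem_sub.2 ⟨k0 - 1, rfl⟩
  · rintro ⟨c, hc, hu⟩
    constructor
    · intro h
      subst h
      exact T.not_mem_sub_child hc hu
    · exact T.sub_subset (T.anc_of_child hc) hu

lemma children_sub_disjoint {v : Fin n} {c c' : Fin n} (hc : c ∈ T.children v)
    (hc' : c' ∈ T.children v) (hne : c ≠ c') : Disjoint (T.Sub c) (T.Sub c') := by
  rw [Finset.disjoint_left]
  intro x hx hx'
  have hcomp := T.anc_comparable (T.mem_sub.1 hx) (T.mem_sub.1 hx')
  have key : ∀ a b : Fin n, a ∈ T.children v → b ∈ T.children v → T.Anc a b → a = b := by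
    intro a b ha hb ⟨k, hkk⟩
    rcases Nat.eq_zero_or_pos k with h0 | hpos
    · rw [h0] at hkk; simpa using hkk.symm
    · exfalso
      have hav : T.Anc a v := ⟨k - 1, by
        rw [← (T.mem_children.1 hb).1, ← Function.iterate_succ_apply,
          show (k-1).succ = k by omega, hkk]⟩
      exact (T.mem_children.1 ha).2 (T.anc_antisymm (T.anc_of_child ha) hav)
  rcases hcomp with h | h
  · exact hne (key c c' hc hc' h)
  · exact hne (key c' c hc' hc h).symm

lemma subSize_children_sum (v : Fin n) :
    T.subSize v = 1 + ∑ c ∈ T.children v, T.subSize c := by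
  have h1 : T.Sub v = insert v ((T.Sub v).erase v) :=
    (Finset.insert_erase (T.self_mem_sub v)).symm
  rw [T.subSize_eq_card, h1, Finset.card_insert_of_notMem (Finset.notMem_erase v _),
    T.erase_sub_eq, Finset.card_biUnion (fun c hc c' hc' hne => T.children_sub_disjoint hc hc' hne)]
  simp [add_comm, subSize_eq_card]

lemma subSize_pos (v : Fin n) : 1 ≤ T.subSize v :=
  Finset.card_pos.2 ⟨v, T.self_mem_sub v⟩

lemma subSize_lt_of_child {c v : Fin n} (hc : c ∈ T.children v) :
    T.subSize c < T.subSize v := by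
  rw [subSize_eq_card, subSize_eq_card]
  apply Finset.card_lt_card
  refine ⟨T.sub_subset (T.anc_of_child hc), fun h => T.not_mem_sub_child hc (h (T.self_mem_sub v))⟩

noncomputable def Sr (m : ℕ) : ℝ := ∑ k ∈ Finset.range m, (k:ℝ)^2

lemma Sr_succ (m : ℕ) : Sr (m+1) = Sr m + (m:ℝ)^2 := by
  simp [Sr, Finset.sum_range_succ]

lemma Sr_add (a b : ℕ) : Sr (a+b) = Sr a + Sr b + (a:ℝ)*(b:ℝ)*((a:ℝ)+(b:ℝ)-1) := by
  induction b with
  | zero => simp [Sr]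
  | succ b ih =>
    rw [show a + (b+1) = (a+b)+1 by omega, Sr_succ, ih, Sr_succ]
    push_cast
    ring

noncomputable def Phi (M : ℝ) (m : ℕ) : ℝ := Sr m + (m:ℝ)^2 * (M - (m:ℝ))

lemma phi_add_lt (M : ℝ) (a b : ℕ) (ha : 1 ≤ a) (hb : 1 ≤ b)
    (h : (a:ℝ) + (b:ℝ) + 1 ≤ M) : Phi M a + Phi M b < Phi M (a+b) := by
  have h1 : (1:ℝ) ≤ (a:ℝ) := by exact_mod_cast ha
  have h2 : (1:ℝ) ≤ (b:ℝ) := by exact_mod_cast hb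
  have hab : (0:ℝ) < (a:ℝ)*(b:ℝ) := by nlinarith
  simp only [Phi, Sr_add]
  push_cast
  nlinarith [mul_nonneg hab.le (by linarith : (0:ℝ) ≤ M - (a:ℝ) - (b:ℝ) - 1)]

lemma sum_phi_le (M : ℝ) (m : Fin n → ℕ) :
    ∀ C : Finset (Fin n), C.Nonempty → (∀ c ∈ C, 1 ≤ m c) →
      ((∑ c ∈ C, m c : ℕ) : ℝ) + 1 ≤ M →
      (∑ c ∈ C, Phi M (m c)) ≤ Phi M (∑ c ∈ C, m c) ∧
        (2 ≤ C.card → (∑ c ∈ C, Phi M (m c)) < Phi M (∑ c ∈ C, m c)) := by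
  intro C
  induction C using Finset.cons_induction with
  | empty => intro h; exact absurd h (by simp)
  | cons a s ha ih =>
    intro _ hm hsum
    rcases s.eq_empty_or_nonempty with rfl | hs
    · simp
    · have hma : 1 ≤ m a := hm a (Finset.mem_cons_self a s)
      have hms : ∀ c ∈ s, 1 ≤ m c := fun c hc => hm c (Finset.mem_cons_of_mem hc)
      obtain ⟨c0, hc0⟩ := hs
      have hs1 : 1 ≤ ∑ c ∈ s, m c :=
        le_trans (hms c0 hc0) (Finset.single_le_sum (fun c _ => Nat.zero_le _) hc0)
      rw [Finset.sum_cons] at hsum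
      have hsum_s : ((∑ c ∈ s, m c : ℕ) : ℝ) + 1 ≤ M := by
        push_cast at hsum ⊢
        have : (1:ℝ) ≤ (m a : ℝ) := by exact_mod_cast hma
        linarith
      obtain ⟨ihle, _⟩ := ih ⟨c0, hc0⟩ hms hsum_s
      have hkey : Phi M (m a) + Phi M (∑ c ∈ s, m c) < Phi M (m a + ∑ c ∈ s, m c) := by
        apply phi_add_lt M _ _ hma hs1
        push_cast at hsum ⊢
        linarith
      have hlt : (∑ c ∈ Finset.cons a s ha, Phi M (m c)) < Phi M (∑ c ∈ Finset.cons a s ha, m c) := by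
        rw [Finset.sum_cons, Finset.sum_cons]
        calc Phi M (m a) + ∑ c ∈ s, Phi M (m c)
            ≤ Phi M (m a) + Phi M (∑ c ∈ s, m c) := by linarith
          _ < Phi M (m a + ∑ c ∈ s, m c) := hkey
      exact ⟨hlt.le, fun _ => hlt⟩

noncomputable def F (v : Fin n) : ℝ :=
  ∑ u ∈ (T.Sub v).erase v,
    (T.subSize u : ℝ) ^ 2 * ((T.subSize (T.parent u) : ℝ) - (T.subSize u : ℝ))

lemma F_decomp (v : Fin n) :
    T.F v = ∑ c ∈ T.children v,
      ((T.subSize c : ℝ) ^ 2 * ((T.subSize v : ℝ) - (T.subSize c : ℝ)) + T.F c) := by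
  rw [F, erase_sub_eq, Finset.sum_biUnion]
  · apply Finset.sum_congr rfl
    intro c hc
    have h1 : T.Sub c = insert c ((T.Sub c).erase c) :=
      (Finset.insert_erase (T.self_mem_sub c)).symm
    rw [h1, Finset.sum_insert (Finset.notMem_erase c _), (T.mem_children.1 hc).1]
    rfl
  · intro c hc c' hc' hne
    exact T.children_sub_disjoint (by simpa using hc) (by simpa using hc') hne

lemma prop_iff (v : Fin n) :
    (∀ u ∈ T.Sub v, (T.children u).card ≤ 1) ↔
      ((T.children v).card ≤ 1 ∧
        ∀ c ∈ T.children v, ∀ u ∈ T.Sub c, (T.children u).card ≤ 1) := by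
  constructor
  · intro h
    exact ⟨h v (T.self_mem_sub v),
      fun c hc u hu => h u (T.sub_subset (T.anc_of_child hc) hu)⟩
  · rintro ⟨h1, h2⟩ u hu
    by_cases he : u = v
    · subst he; exact h1
    · have : u ∈ (T.Sub v).erase v := Finset.mem_erase.2 ⟨he, hu⟩
      rw [T.erase_sub_eq] at this
      obtain ⟨c, hc, hu'⟩ := Finset.mem_biUnion.1 this
      exact h2 c hc u hu'

lemma F_le_aux : ∀ N : ℕ, ∀ v : Fin n, T.subSize v ≤ N →
    T.F v ≤ Sr (T.subSize v) ∧
      (T.F v = Sr (T.subSize v) ↔ ∀ u ∈ T.Sub v, (T.children u).card ≤ 1) := by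
  intro N
  induction N with
  | zero => intro v hv; exact absurd (T.subSize_pos v) (by omega)
  | succ N ih =>
    intro v hv
    have hIH : ∀ c ∈ T.children v, T.F c ≤ Sr (T.subSize c) ∧
        (T.F c = Sr (T.subSize c) ↔ ∀ u ∈ T.Sub c, (T.children u).card ≤ 1) :=
      fun c hc => ih c (by have := T.subSize_lt_of_child hc; omega)
    rcases (T.children v).eq_empty_or_nonempty with hemp | hne
    · have hF : T.F v = 0 := by rw [T.F_decomp, hemp]; simp
      have hM : T.subSize v = 1 := by rw [T.subSize_children_sum, hemp]; simp
      have hSub : T.Sub v = {v} := by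
        have h1 : T.Sub v = insert v ((T.Sub v).erase v) :=
          (Finset.insert_erase (T.self_mem_sub v)).symm
        rw [h1, T.erase_sub_eq, hemp]
        simp
      constructor
      · rw [hF, hM]; simp [Sr]
      · constructor
        · intro _ u hu
          rw [hSub, Finset.mem_singleton] at hu
          subst hu
          rw [hemp]
          simp
        · intro _
          rw [hF, hM]; simp [Sr]
    · -- nonempty children
      set M := T.subSize v with hMdef
      have hsum : M = 1 + ∑ c ∈ T.children v, T.subSize c := T.subSize_children_sum v
      have hterm : ∀ c ∈ T.children v,
          (T.subSize c : ℝ) ^ 2 * ((M : ℝ) - (T.subSize c : ℝ)) + T.F c ≤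
            Phi (M : ℝ) (T.subSize c) := by
        intro c hc
        have := (hIH c hc).1
        simp only [Phi]
        linarith
      have hAB : T.F v ≤ ∑ c ∈ T.children v, Phi (M : ℝ) (T.subSize c) := by
        rw [T.F_decomp]
        exact Finset.sum_le_sum hterm
      have hsumcast : ((∑ c ∈ T.children v, T.subSize c : ℕ) : ℝ) + 1 ≤ (M : ℝ) := by
        have : ((M : ℕ) : ℝ) = ((∑ c ∈ T.children v, T.subSize c : ℕ) : ℝ) + 1 := by
          rw [hsum]; push_cast; ring
        linarith
      obtain ⟨hB1, hB2⟩ := sum_phi_le (M : ℝ) T.subSize (T.children v) hne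
        (fun c _ => T.subSize_pos c) hsumcast
      have hPhiSr : Phi (M : ℝ) (∑ c ∈ T.children v, T.subSize c) = Sr M := by
        set s := ∑ c ∈ T.children v, T.subSize c with hsdef
        have hMs : M = s + 1 := by omega
        rw [hMs, Sr_succ, Phi]
        have : ((s:ℕ):ℝ) + 1 - (s:ℝ) = 1 := by push_cast; ring
        push_cast
        ring
      have hBC : (∑ c ∈ T.children v, Phi (M : ℝ) (T.subSize c)) ≤ Sr M := hPhiSr ▸ hB1
      refine ⟨le_trans hAB hBC, ?_, ?_⟩
      · -- forward: equality implies path property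
        intro heq
        have hABeq : T.F v = ∑ c ∈ T.children v, Phi (M : ℝ) (T.subSize c) :=
          le_antisymm hAB (by rw [heq] at *; linarith)
        have hcard : (T.children v).card ≤ 1 := by
          by_contra hc2
          have := hB2 (by omega)
          rw [hPhiSr] at this
          linarith [hABeq ▸ heq]
        have htermeq : ∀ c ∈ T.children v,
            (T.subSize c : ℝ) ^ 2 * ((M : ℝ) - (T.subSize c : ℝ)) + T.F c =
              Phi (M : ℝ) (T.subSize c) := by
          rw [T.F_decomp] at hABeq
          exact (Finset.sum_eq_sum_iff_of_le hterm).1 hABeq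
        rw [T.prop_iff]
        refine ⟨hcard, fun c hc u hu => ?_⟩
        have hFc : T.F c = Sr (T.subSize c) := by
          have h2 := htermeq c hc
          simp only [Phi] at h2
          linarith
        exact ((hIH c hc).2.1 hFc) u hu
      · -- backward: path property implies equality
        intro hprop
        obtain ⟨h1, h2⟩ := (T.prop_iff v).1 hprop
        have hcard1 : (T.children v).card = 1 :=
          le_antisymm h1 (Finset.card_pos.2 hne)
        obtain ⟨c0, hc0⟩ := Finset.card_eq_one.1 hcard1
        have hc0mem : c0 ∈ T.children v := by rw [hc0]; simp
        have hFc0 : T.F c0 = Sr (T.subSize c0) :=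
          (hIH c0 hc0mem).2.2 (h2 c0 hc0mem)
        have hMs : M = T.subSize c0 + 1 := by
          rw [hsum, hc0]; simp; omega
        rw [T.F_decomp, hc0, Finset.sum_singleton, hFc0, hMs, Sr_succ]
        have hcast : ((T.subSize v : ℕ) : ℝ) = (T.subSize c0 : ℝ) + 1 := by
          rw [← hMdef, hMs]; push_cast; ring
        rw [hcast]
        ring

lemma sub_root_eq_univ : T.Sub T.root = Finset.univ := by
  ext u
  simp only [Finset.mem_univ, iff_true, mem_sub]
  exact T.reaches u

lemma subSize_root : T.subSize T.root = n := by
  rw [subSize_eq_card, sub_root_eq_univ, Finset.card_univ, Fintype.card_fin]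

lemma fval_eq_F : T.fval = T.F T.root := by
  rw [fval, F, sub_root_eq_univ]
  apply Finset.sum_congr _ (fun _ _ => rfl)
  rw [Finset.filter_ne']

lemma eq_root_of_parent_eq_self {v : Fin n} (h : T.parent v = v) : v = T.root := by
  obtain ⟨k, hk⟩ := T.reaches v
  have : ∀ j, T.parent^[j] v = v := by
    intro j
    induction j with
    | zero => rfl
    | succ j ihj => rw [Function.iterate_succ_apply', ihj, h]
  rw [this k] at hk
  exact hk

lemma path_iff : T.IsPathTree ↔ ∀ u : Fin n, (T.children u).card ≤ 1 := by
  constructor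
  · intro hp u
    apply Finset.card_le_one.2
    intro a ha b hb
    obtain ⟨hpa, hau⟩ := T.mem_children.1 ha
    obtain ⟨hpb, hbu⟩ := T.mem_children.1 hb
    have haroot : a ≠ T.root := by
      intro h; subst h
      exact hau (by rw [← hpa, T.root_fixed])
    have hbroot : b ≠ T.root := by
      intro h; subst h
      exact hbu (by rw [← hpb, T.root_fixed])
    exact hp a b haroot hbroot (by rw [hpa, hpb])
  · intro h v w hv hw hpar
    have hvne : T.parent v ≠ v := fun hh => hv (T.eq_root_of_parent_eq_self hh)
    have hwne : T.parent w ≠ w := fun hh => hw (T.eq_root_of_parent_eq_self hh)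
    have hvmem : v ∈ T.children (T.parent v) :=
      T.mem_children.2 ⟨rfl, fun hh => hvne (hh ▸ rfl)⟩
    have hwmem : w ∈ T.children (T.parent v) :=
      T.mem_children.2 ⟨hpar.symm, fun hh => hwne (by rw [← hpar, hh])⟩
    exact Finset.card_le_one.1 (h (T.parent v)) v hvmem w hwmem

lemma F_le_Sr : T.fval ≤ Sr n ∧ (T.fval = Sr n ↔ T.IsPathTree) := by
  have h := T.F_le_aux (T.subSize T.root) T.root le_rfl
  rw [← fval_eq_F, subSize_root] at h
  refine ⟨h.1, h.2.trans ?_⟩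
  rw [path_iff]
  constructor
  · intro hh u; exact hh u (by rw [sub_root_eq_univ]; exact Finset.mem_univ u)
  · intro hh u _; exact hh u

end ParentTree

/-- `f(T) = ∑_{v ≠ root} I(v)²(I(parent v) − I(v))` is maximized over all rooted
trees on `n` vertices exactly when the tree is a path. -/
theorem fval_maximized_iff_path (n : ℕ) (P : ParentTree n) (hP : P.IsPathTree)
    (T : ParentTree n) :
    T.fval ≤ P.fval ∧ (T.fval = P.fval ↔ T.IsPathTree) := by
  have hPeq : P.fval = ParentTree.Sr n := (P.F_le_Sr).2.2 hP
  have hT := T.F_le_Sr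
  rw [hPeq]
  exact hT
end

section
/- Let I(1),...,I(s) be positive reals summing to n and Z = sum_r (I(r)/n)^2. Then (2/3) * sum_r I(r)^3 / (n^2 Z + 2 n I(r)) >= 0.09 * n / s. -/
open Finset

theorem core_forest_inequality (s : ℕ) (hs : 0 < s) (I : Fin s → ℝ) (n : ℝ)
    (hpos : ∀ r, 0 < I r) (hsum : ∑ r, I r = n) :
    (0.09 : ℝ) * n / s ≤
      (2 / 3 : ℝ) * ∑ r, I r ^ 3 /
        (n ^ 2 * (∑ t, (I t / n) ^ 2) + 2 * n * I r) := by
  have hne : (Finset.univ : Finset (Fin s)).Nonempty := by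
    simpa [Finset.univ_nonempty_iff] using Fin.pos_iff_nonempty.mp hs
  have hn : 0 < n := by
    rw [← hsum]
    exact Finset.sum_pos (fun r _ => hpos r) hne
  set S2 := ∑ t, I t ^ 2 with hS2
  have hS2pos : 0 < S2 := Finset.sum_pos (fun r _ => pow_pos (hpos r) 2) hne
  have hZ : n ^ 2 * (∑ t, (I t / n) ^ 2) = S2 := by
    rw [Finset.mul_sum]
    refine Finset.sum_congr rfl fun t _ => ?_
    field_simp
  -- Cauchy-Schwarz lower bound on n^2/s ≤ S2
  have hCS : n ^ 2 ≤ s * S2 := by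
    have := sq_sum_le_card_mul_sum_sq (s := (Finset.univ : Finset (Fin s))) (f := I)
    simpa [hsum] using this
  -- Engel form
  have hD : ∀ r : Fin s, 0 < S2 + 2 * n * I r := fun r =>
    add_pos hS2pos (mul_pos (mul_pos two_pos hn) (hpos r))
  have hEngel : (∑ r, I r ^ 2) ^ 2 / (∑ r, I r * (S2 + 2 * n * I r)) ≤
      ∑ r, I r ^ 3 / (S2 + 2 * n * I r) := by
    have h := sq_sum_div_le_sum_sq_div (Finset.univ : Finset (Fin s))
      (fun r => I r ^ 2) (g := fun r => I r * (S2 + 2 * n * I r))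
      (fun r _ => mul_pos (hpos r) (hD r))
    calc (∑ r, I r ^ 2) ^ 2 / (∑ r, I r * (S2 + 2 * n * I r))
        ≤ ∑ r, (I r ^ 2) ^ 2 / (I r * (S2 + 2 * n * I r)) := h
      _ = ∑ r, I r ^ 3 / (S2 + 2 * n * I r) := by
          refine Finset.sum_congr rfl fun r _ => ?_
          rw [div_eq_div_iff (mul_pos (hpos r) (hD r)).ne' (hD r).ne']
          ring
  have hden : (∑ r, I r * (S2 + 2 * n * I r)) = 3 * n * S2 := by
    have : (∑ r, I r * (S2 + 2 * n * I r)) = (∑ r, I r) * S2 + 2 * n * ∑ r, I r ^ 2 := by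
      rw [Finset.sum_mul, Finset.mul_sum, ← Finset.sum_add_distrib]
      exact Finset.sum_congr rfl fun r _ => by ring
    rw [this, hsum, ← hS2]; ring
  have hsum_lb : S2 / (3 * n) ≤ ∑ r, I r ^ 3 / (S2 + 2 * n * I r) := by
    have : (∑ r, I r ^ 2) ^ 2 / (3 * n * S2) = S2 / (3 * n) := by
      rw [← hS2]
      field_simp
    calc S2 / (3 * n) = (∑ r, I r ^ 2) ^ 2 / (∑ r, I r * (S2 + 2 * n * I r)) := by
          rw [hden, this]
      _ ≤ _ := hEngel
  have hfinal : ∑ r, I r ^ 3 / (n ^ 2 * (∑ t, (I t / n) ^ 2) + 2 * n * I r)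
      = ∑ r, I r ^ 3 / (S2 + 2 * n * I r) := by
    refine Finset.sum_congr rfl fun r _ => ?_
    rw [hZ]
  rw [hfinal]
  have hs' : (0 : ℝ) < s := by exact_mod_cast hs
  have h1 : (0.09 : ℝ) * n / s ≤ (2 / 3) * (S2 / (3 * n)) := by
    rw [div_le_iff₀ hs']
    have : n ^ 2 / n ≤ S2 * s / n := by
      gcongr
      calc n ^ 2 ≤ s * S2 := hCS
        _ = S2 * s := by ring
    have h2 : n ≤ S2 * s / n := by
      calc n = n ^ 2 / n := by field_simp
        _ ≤ _ := this
    calc (0.09 : ℝ) * n ≤ (2/9) * n := by nlinarith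
      _ ≤ (2/9) * (S2 * s / n) := by nlinarith
      _ = 2 / 3 * (S2 / (3 * n)) * s := by field_simp; ring
  calc (0.09 : ℝ) * n / s ≤ (2 / 3) * (S2 / (3 * n)) := h1
    _ ≤ _ := by
      apply mul_le_mul_of_nonneg_left hsum_lb (by norm_num)
end

section
/- Let G be a monotone finite DAG (for every edge (x,y), I(x) < I(y)) with n = |V|, sinks S, and Z = sum over r in S of (I(r)/n)^2. For a vertex v, let G_v be G with all out-edges of v removed and Z_v = Z(G_v) the corresponding quantity for G_v. Then Z - 2 I(v)/n <= Z_v <= Z. -/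
open Finset
open scoped Classical

noncomputable section

variable {V : Type*} [Fintype V] [DecidableEq V]

/-- The out-degree of `x` in the digraph with edge relation `E`. -/
def outdeg (E : V → V → Prop) [DecidableRel E] (x : V) : ℕ :=
  (Finset.univ.filter fun y => E x y).card

/-- The weight of a path `l = [v₀, v₁, …, vₘ]`: the product over the edges
`(vᵢ, vᵢ₊₁)` of `1 / outdeg vᵢ`. -/
def pathWeight (E : V → V → Prop) [DecidableRel E] (l : List V) : ℝ :=
  ((l.zip l.tail).map fun p => 1 / (outdeg E p.1 : ℝ)).prod

/-- `l` is a simple directed path from `y` to `x`. -/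
def IsPathList (E : V → V → Prop) (y x : V) (l : List V) : Prop :=
  l ≠ [] ∧ l.Chain' E ∧ l.head? = some y ∧ l.getLast? = some x ∧ l.Nodup

/-- The (finite) set of all simple directed paths from `y` to `x`. -/
def pathFinset (E : V → V → Prop) (y x : V) : Finset (List V) :=
  ((Finset.univ : Finset {l : List V // l.Nodup}).map
      ⟨Subtype.val, Subtype.val_injective⟩).filter (IsPathList E y x)

/-- `infl E x y` : the influence `I(x, y)` of `x` on `y`, i.e. the sum over all
simple paths from `y` to `x` of the product of `1/outdeg` along the path.
(When `x = y` the only simple path is `[x]`, of weight `1`.) -/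
def infl (E : V → V → Prop) [DecidableRel E] (x y : V) : ℝ :=
  ∑ l ∈ pathFinset E y x, pathWeight E l

/-- `totInfl E x = I(x) = ∑_y I(x, y)` : the total influence of `x`. -/
def totInfl (E : V → V → Prop) [DecidableRel E] (x : V) : ℝ :=
  ∑ y, infl E x y

/-- The digraph is acyclic. -/
def Acyclic (E : V → V → Prop) : Prop := ∀ x, ¬ Relation.TransGen E x x

/-- The set of sinks (vertices with no out-edges). -/
def sinks (E : V → V → Prop) [DecidableRel E] : Finset V :=
  Finset.univ.filter fun r => outdeg E r = 0

end

noncomputable section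
variable {V : Type*} [Fintype V] [DecidableEq V]

/-- The digraph is monotone: along every edge, influence strictly increases. -/
def MonotoneDigraph (E : V → V → Prop) [DecidableRel E] : Prop :=
  ∀ x y, E x y → totInfl E x < totInfl E y

/-- The graph obtained from `E` by removing all out-edges of `v`. -/
def remOut (E : V → V → Prop) (v : V) : V → V → Prop := fun a b => E a b ∧ a ≠ v

instance (E : V → V → Prop) [DecidableRel E] (v : V) : DecidableRel (remOut E v) :=
  fun _ _ => instDecidableAnd

/-- `Z = ∑_{r sink} (I(r)/n)²`. -/
def Zval (E : V → V → Prop) [DecidableRel E] : ℝ :=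
  ∑ r ∈ sinks E, (totInfl E r / (Fintype.card V : ℝ)) ^ 2

/-- `Z(v) = (I(v)/n)² − ∑_{u ∈ N(v)} I(v,u) (I(u)/n)²`, where `N(v)` is the set
of in-neighbours of `v`. -/
def Zfun (E : V → V → Prop) [DecidableRel E] (v : V) : ℝ :=
  (totInfl E v / (Fintype.card V : ℝ)) ^ 2 -
    ∑ u ∈ Finset.univ.filter (fun u => E u v),
      infl E v u * (totInfl E u / (Fintype.card V : ℝ)) ^ 2

end

/-!
First-step analysis: off `r`, the influence `I(r, ·)` satisfies
`I(r, y) = (∑_{y → z} I(r, z)) / outdeg y`, and on a DAG a function with this property off a set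
`B` is determined by its values on `B`. Comparing boundary values gives `∑_{r sink} I(r, y) = 1`,
`I_{G_v}(v, ·) = I(v, ·)`, and `I(r, ·) = I_{G_v}(r, ·) + I(r, v) I(v, ·)` for sinks `r ≠ v`.
So, with `a = I(v)/n`, `t_r = I(r)/n` and `c_r = I(r, v)`, we get `Z = ∑ t_r²` and
`Z_v = a² + ∑ (t_r - a c_r)²`, where `c_r ≥ 0`, `∑ c_r = 1`, `t_r ≤ 1`, and monotonicity gives
`c_r a ≤ c_r t_r`. Expanding the squares yields both bounds.
-/

section Harmonic

variable {V : Type*} [Fintype V] {E : V → V → Prop}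

theorem Acyclic.wellFounded (hacyc : Acyclic E) : WellFounded (flip (Relation.TransGen E)) :=
  have : IsTrans V (flip (Relation.TransGen E)) := ⟨fun _ _ _ hab hbc => hbc.trans hab⟩
  have : Std.Irrefl (flip (Relation.TransGen E)) := ⟨hacyc⟩
  Finite.wellFounded_of_trans_of_irrefl _

variable [DecidableRel E]

/-- At a sink the right-hand side is `0 / 0 = 0`. -/
def IsHarmonicAt (E : V → V → Prop) [DecidableRel E] (f : V → ℝ) (y : V) : Prop :=
  f y = (∑ z ∈ univ.filter (E y ·), f z) / outdeg E y

theorem isHarmonicAt_sum {ι : Type*} (s : Finset ι) {f : ι → V → ℝ} {y : V}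
    (hf : ∀ i ∈ s, IsHarmonicAt E (f i) y) :
    IsHarmonicAt E (fun x => ∑ i ∈ s, f i x) y := by
  rw [IsHarmonicAt, Finset.sum_comm, Finset.sum_div]
  exact Finset.sum_congr rfl hf

theorem IsHarmonicAt.add {f g : V → ℝ} {y : V} (hf : IsHarmonicAt E f y)
    (hg : IsHarmonicAt E g y) : IsHarmonicAt E (f + g) y := by
  rw [IsHarmonicAt, Pi.add_apply, hf, hg, ← add_div, ← Finset.sum_add_distrib]
  rfl

theorem IsHarmonicAt.const_mul {f : V → ℝ} {y : V} (hf : IsHarmonicAt E f y) (c : ℝ) :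
    IsHarmonicAt E (fun x => c * f x) y := by
  rw [IsHarmonicAt, ← Finset.mul_sum, mul_div_assoc, ← hf]

theorem isHarmonicAt_one {y : V} (hy : outdeg E y ≠ 0) : IsHarmonicAt E (fun _ => 1) y := by
  rw [IsHarmonicAt, Finset.sum_const, nsmul_one, ← outdeg, div_self (Nat.cast_ne_zero.mpr hy)]

theorem IsHarmonicAt.eq_zero {f : V → ℝ} {y : V} (hf : IsHarmonicAt E f y)
    (hy : outdeg E y = 0) : f y = 0 := by
  rw [hf, hy, Nat.cast_zero, div_zero]

theorem Acyclic.eq_of_isHarmonicAt (hacyc : Acyclic E) {B : Set V} {f g : V → ℝ}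
    (hB : ∀ y ∈ B, f y = g y) (hf : ∀ y ∉ B, IsHarmonicAt E f y)
    (hg : ∀ y ∉ B, IsHarmonicAt E g y) : f = g := by
  funext y
  induction y using hacyc.wellFounded.induction with
  | _ y ih =>
    by_cases hy : y ∈ B
    · exact hB y hy
    rw [hf y hy, hg y hy]
    congr 1
    exact Finset.sum_congr rfl fun z hz => ih z (.single (Finset.mem_filter.mp hz).2)

end Harmonic

section Paths

variable {V : Type*} [Fintype V] {E : V → V → Prop}

theorem mem_pathFinset {y x : V} {l : List V} : l ∈ pathFinset E y x ↔ IsPathList E y x l := by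
  simp only [pathFinset, Finset.mem_filter, Finset.mem_map, Finset.mem_univ, true_and,
    Function.Embedding.coeFn_mk]
  exact ⟨fun h => h.2, fun h => ⟨⟨⟨l, h.2.2.2.2⟩, rfl⟩, h⟩⟩

theorem pathFinset_self (x : V) : pathFinset E x x = {[x]} := by
  ext l
  rw [mem_pathFinset, Finset.mem_singleton]
  constructor
  · rintro ⟨hne, -, hh, hl, hnd⟩
    obtain ⟨t, rfl⟩ := List.head?_eq_some_iff.mp hh
    cases t with
    | nil => rfl
    | cons b t =>
      rw [List.getLast?_cons_cons] at hl
      exact absurd (List.mem_of_mem_getLast? hl) (List.nodup_cons.mp hnd).1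
  · rintro rfl
    exact ⟨List.cons_ne_nil _ _, List.isChain_singleton x, rfl, rfl, List.nodup_singleton x⟩

variable [DecidableRel E]

theorem pathWeight_cons_cons (a b : V) (t : List V) :
    pathWeight E (a :: b :: t) = 1 / (outdeg E a : ℝ) * pathWeight E (b :: t) := by
  simp [pathWeight]

theorem pathWeight_nonneg (l : List V) : 0 ≤ pathWeight E l :=
  List.prod_nonneg fun _ hx => by
    obtain ⟨_, -, rfl⟩ := List.mem_map.mp hx
    positivity

theorem infl_nonneg (x y : V) : 0 ≤ infl E x y :=
  Finset.sum_nonneg fun l _ => pathWeight_nonneg l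

theorem totInfl_nonneg (x : V) : 0 ≤ totInfl E x :=
  Finset.sum_nonneg fun y _ => infl_nonneg x y

theorem infl_self (x : V) : infl E x x = 1 := by
  rw [infl, pathFinset_self, Finset.sum_singleton]
  rfl

theorem reflTransGen_of_infl_ne_zero {x y : V} (h : infl E x y ≠ 0) :
    Relation.ReflTransGen E y x := by
  obtain ⟨l, hl⟩ := Finset.nonempty_of_sum_ne_zero h
  obtain ⟨hne, hch, hh, hlast, -⟩ := mem_pathFinset.mp hl
  rw [List.head?_eq_some_head hne, Option.some_inj] at hh
  rw [List.getLast?_eq_some_getLast hne, Option.some_inj] at hlast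
  exact hh ▸ hlast ▸ List.relationReflTransGen_of_exists_isChain l hch hne

/-- Acyclicity is what keeps the prepended paths simple. -/
theorem pathFinset_eq_biUnion (hacyc : Acyclic E) {y x : V} (hyx : y ≠ x) :
    pathFinset E y x =
      (univ.filter (E y ·)).biUnion fun z => (pathFinset E z x).image (List.cons y) := by
  ext l
  simp only [Finset.mem_biUnion, Finset.mem_image, Finset.mem_filter, Finset.mem_univ, true_and,
    mem_pathFinset]
  constructor
  · rintro ⟨-, hch, hh, hl, hnd⟩
    obtain ⟨t, rfl⟩ := List.head?_eq_some_iff.mp hh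
    cases t with
    | nil => exact absurd (Option.some_inj.mp hl) hyx
    | cons z t =>
      rw [List.Chain', List.isChain_cons_cons] at hch
      rw [List.getLast?_cons_cons] at hl
      exact ⟨z, hch.1, z :: t,
        ⟨List.cons_ne_nil _ _, hch.2, rfl, hl, (List.nodup_cons.mp hnd).2⟩, rfl⟩
  · rintro ⟨z, hz, m, ⟨-, hch, hh, hl, hnd⟩, rfl⟩
    obtain ⟨t, rfl⟩ := List.head?_eq_some_iff.mp hh
    have hy : y ∉ z :: t := fun hy => hacyc y <|
      List.IsChain.induction (Relation.TransGen E y) _ hch (fun _ _ h ih => ih.tail h)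
        (fun _ => .single hz) y hy
    refine ⟨List.cons_ne_nil _ _, List.isChain_cons_cons.mpr ⟨hz, hch⟩, rfl, ?_,
      List.nodup_cons.mpr ⟨hy, hnd⟩⟩
    rwa [List.getLast?_cons_cons]

theorem isHarmonicAt_infl (hacyc : Acyclic E) {x y : V} (hyx : y ≠ x) :
    IsHarmonicAt E (infl E x) y := by
  rw [IsHarmonicAt, infl, pathFinset_eq_biUnion hacyc hyx, Finset.sum_biUnion, Finset.sum_div]
  · refine Finset.sum_congr rfl fun z _ => ?_
    rw [Finset.sum_image fun _ _ _ _ h => List.cons_injective h, infl, Finset.sum_div]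
    refine Finset.sum_congr rfl fun m hm => ?_
    obtain ⟨t, rfl⟩ := List.head?_eq_some_iff.mp (mem_pathFinset.mp hm).2.2.1
    rw [pathWeight_cons_cons]
    ring
  · intro z₁ _ z₂ _ hz
    refine Finset.disjoint_left.mpr fun l h₁ h₂ => hz ?_
    obtain ⟨m₁, hm₁, rfl⟩ := Finset.mem_image.mp h₁
    obtain ⟨m₂, hm₂, hm⟩ := Finset.mem_image.mp h₂
    have h := (mem_pathFinset.mp hm₂).2.2.1
    rw [List.cons_injective hm, (mem_pathFinset.mp hm₁).2.2.1] at h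
    exact Option.some_inj.mp h

end Paths

section Sinks

variable {V : Type*} [Fintype V] {E : V → V → Prop} [DecidableRel E]

theorem mem_sinks {r : V} : r ∈ sinks E ↔ outdeg E r = 0 := by
  simp [sinks]

theorem not_rel_of_mem_sinks {r : V} (hr : r ∈ sinks E) (z : V) : ¬ E r z := by
  rw [mem_sinks, outdeg, Finset.card_eq_zero, Finset.filter_eq_empty_iff] at hr
  exact hr (Finset.mem_univ z)

theorem infl_eq_zero_of_mem_sinks (hacyc : Acyclic E) {x y : V} (hy : y ∈ sinks E)
    (hyx : y ≠ x) : infl E x y = 0 :=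
  (isHarmonicAt_infl hacyc hyx).eq_zero (mem_sinks.mp hy)

theorem sum_sinks_infl (hacyc : Acyclic E) (y : V) : ∑ r ∈ sinks E, infl E r y = 1 := by
  suffices (fun y => ∑ r ∈ sinks E, infl E r y) = fun _ => 1 from congrFun this y
  refine hacyc.eq_of_isHarmonicAt (B := sinks E) (fun y hy => ?_) (fun y hy => ?_)
    (fun y hy => isHarmonicAt_one (mt mem_sinks.mpr hy))
  · rw [Finset.sum_eq_single_of_mem y hy fun r _ hry =>
      infl_eq_zero_of_mem_sinks hacyc hy hry.symm, infl_self]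
  · exact isHarmonicAt_sum _ fun r hr => isHarmonicAt_infl hacyc fun h => hy (h ▸ hr)

theorem totInfl_le_card (hacyc : Acyclic E) {r : V} (hr : r ∈ sinks E) :
    totInfl E r ≤ Fintype.card V := by
  have hle (y : V) : infl E r y ≤ 1 :=
    sum_sinks_infl hacyc y ▸ Finset.single_le_sum (fun i _ => infl_nonneg i y) hr
  simpa [totInfl] using Finset.sum_le_sum fun y (_ : y ∈ univ) => hle y

theorem MonotoneDigraph.totInfl_le {a b : V} (hmono : MonotoneDigraph E)
    (h : Relation.ReflTransGen E a b) : totInfl E a ≤ totInfl E b := by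
  induction h with
  | refl => exact le_rfl
  | tail _ hbc ih => exact ih.trans (hmono _ _ hbc).le

theorem MonotoneDigraph.infl_mul_totInfl_le (hmono : MonotoneDigraph E) (x y : V) :
    infl E x y * totInfl E y ≤ infl E x y * totInfl E x := by
  by_cases h : infl E x y = 0
  · simp [h]
  · exact mul_le_mul_of_nonneg_left (hmono.totInfl_le (reflTransGen_of_infl_ne_zero h))
      (infl_nonneg x y)

end Sinks

section RemOut

variable {V : Type*} {E : V → V → Prop}

theorem Acyclic.remOut (hacyc : Acyclic E) (v : V) : Acyclic (remOut E v) := fun x hx =>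
  hacyc x (Relation.TransGen.mono (fun _ _ h => h.1) x x hx)

variable [Fintype V] [DecidableRel E] {v : V}

theorem remOut_eq_self_of_mem_sinks (hv : v ∈ sinks E) : remOut E v = E := by
  ext a b
  refine ⟨And.left, fun h => ⟨h, ?_⟩⟩
  rintro rfl
  exact not_rel_of_mem_sinks hv b h

variable [DecidableEq V]

theorem filter_remOut_of_ne {y : V} (hy : y ≠ v) :
    univ.filter (remOut E v y ·) = univ.filter (E y ·) := by
  simp [remOut, hy]

theorem isHarmonicAt_remOut_iff {f : V → ℝ} {y : V} (hy : y ≠ v) :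
    IsHarmonicAt (remOut E v) f y ↔ IsHarmonicAt E f y := by
  rw [IsHarmonicAt, IsHarmonicAt, outdeg, outdeg, filter_remOut_of_ne hy]

theorem sinks_remOut : sinks (remOut E v) = insert v (sinks E) := by
  ext r
  rw [Finset.mem_insert, mem_sinks, mem_sinks, outdeg, outdeg]
  by_cases hr : r = v
  · subst hr
    simp [remOut]
  · rw [filter_remOut_of_ne hr]
    simp [hr]

theorem infl_remOut_self (hacyc : Acyclic E) : infl (remOut E v) v = infl E v := by
  refine hacyc.eq_of_isHarmonicAt (B := {v}) (fun y hy => ?_) (fun y hy => ?_)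
    (fun y hy => isHarmonicAt_infl hacyc hy)
  · rw [Set.mem_singleton_iff.mp hy, infl_self, infl_self]
  · exact (isHarmonicAt_remOut_iff hy).mp (isHarmonicAt_infl (hacyc.remOut v) hy)

/-- A walk that reaches the sink `r ≠ v` of `G` either avoids `v`, or reaches `v` first and then
continues from `v`. -/
theorem infl_eq_infl_remOut_add (hacyc : Acyclic E) {r : V} (hr : r ∈ sinks E) (hrv : r ≠ v) :
    infl E r = infl (remOut E v) r + fun y => infl E r v * infl E v y := by
  have hvr : v ∈ sinks (remOut E v) := by
    rw [sinks_remOut]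
    exact Finset.mem_insert_self v _
  refine hacyc.eq_of_isHarmonicAt (B := {r, v}) (fun y hy => ?_)
    (fun y hy => isHarmonicAt_infl hacyc fun h => hy (.inl h)) (fun y hy => ?_)
  · rcases hy with rfl | rfl
    · rw [Pi.add_apply, infl_self, infl_self, infl_eq_zero_of_mem_sinks hacyc hr hrv, mul_zero,
        add_zero]
    · rw [Pi.add_apply, infl_self, infl_eq_zero_of_mem_sinks (hacyc.remOut y) hvr hrv.symm,
        zero_add, mul_one]
  · have hyr : y ≠ r := fun h => hy (.inl h)
    have hyv : y ≠ v := fun h => hy (.inr h)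
    exact ((isHarmonicAt_remOut_iff hyv).mp (isHarmonicAt_infl (hacyc.remOut v) hyr)).add
      ((isHarmonicAt_infl hacyc hyv).const_mul _)

theorem totInfl_remOut_self (hacyc : Acyclic E) : totInfl (remOut E v) v = totInfl E v := by
  rw [totInfl, totInfl, infl_remOut_self hacyc]

theorem totInfl_remOut_of_mem_sinks (hacyc : Acyclic E) {r : V} (hr : r ∈ sinks E)
    (hrv : r ≠ v) : totInfl (remOut E v) r = totInfl E r - infl E r v * totInfl E v := by
  rw [totInfl, totInfl, totInfl, Finset.mul_sum, eq_sub_iff_add_eq, ← Finset.sum_add_distrib]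
  exact Finset.sum_congr rfl fun y _ => (congrFun (infl_eq_infl_remOut_add hacyc hr hrv) y).symm

end RemOut

section SumSq

variable {ι : Type*} {s : Finset ι} {t c : ι → ℝ} {a : ℝ}

theorem sq_add_sum_sq_sub_mul_le (ha : 0 ≤ a) (hc₀ : ∀ i ∈ s, 0 ≤ c i)
    (hc : ∑ i ∈ s, c i = 1) (hca : ∀ i ∈ s, c i * a ≤ c i * t i) :
    a ^ 2 + ∑ i ∈ s, (t i - a * c i) ^ 2 ≤ ∑ i ∈ s, t i ^ 2 := by
  have hc₁ (i : ι) (hi : i ∈ s) : c i ≤ 1 := hc ▸ Finset.single_le_sum hc₀ hi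
  have hterm (i : ι) (hi : i ∈ s) : (t i - a * c i) ^ 2 ≤ t i ^ 2 - c i * a ^ 2 := by
    have h₁ := mul_le_mul_of_nonneg_left (hca i hi) ha
    have h₂ : 0 ≤ c i * (1 - c i) * a ^ 2 :=
      mul_nonneg (mul_nonneg (hc₀ i hi) (sub_nonneg.mpr (hc₁ i hi))) (sq_nonneg a)
    nlinarith
  calc a ^ 2 + ∑ i ∈ s, (t i - a * c i) ^ 2
      ≤ a ^ 2 + ∑ i ∈ s, (t i ^ 2 - c i * a ^ 2) := by gcongr with i hi; exact hterm i hi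
    _ = ∑ i ∈ s, t i ^ 2 := by rw [Finset.sum_sub_distrib, ← Finset.sum_mul, hc]; ring

theorem sum_sq_sub_two_mul_le (ha : 0 ≤ a) (hc₀ : ∀ i ∈ s, 0 ≤ c i)
    (hc : ∑ i ∈ s, c i = 1) (ht : ∀ i ∈ s, t i ≤ 1) :
    ∑ i ∈ s, t i ^ 2 - 2 * a ≤ a ^ 2 + ∑ i ∈ s, (t i - a * c i) ^ 2 := by
  have hterm (i : ι) (hi : i ∈ s) : t i ^ 2 - 2 * a * c i ≤ (t i - a * c i) ^ 2 := by
    have := mul_le_mul_of_nonneg_left (ht i hi) (mul_nonneg ha (hc₀ i hi))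
    nlinarith [sq_nonneg (a * c i)]
  calc ∑ i ∈ s, t i ^ 2 - 2 * a
      = ∑ i ∈ s, (t i ^ 2 - 2 * a * c i) := by
        rw [Finset.sum_sub_distrib, ← Finset.mul_sum, hc, mul_one]
    _ ≤ ∑ i ∈ s, (t i - a * c i) ^ 2 := Finset.sum_le_sum hterm
    _ ≤ a ^ 2 + ∑ i ∈ s, (t i - a * c i) ^ 2 := le_add_of_nonneg_left (sq_nonneg a)

end SumSq

section Zval

variable {V : Type*} [Fintype V] [DecidableEq V] {E : V → V → Prop} [DecidableRel E] {v : V}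

theorem Zval_remOut_of_mem_sinks (hv : v ∈ sinks E) : Zval (remOut E v) = Zval E := by
  congr 1
  exact remOut_eq_self_of_mem_sinks hv

theorem Zval_remOut_of_notMem_sinks (hacyc : Acyclic E) (hv : v ∉ sinks E) :
    Zval (remOut E v) = (totInfl E v / Fintype.card V) ^ 2 +
      ∑ r ∈ sinks E, (totInfl E r / Fintype.card V -
        totInfl E v / Fintype.card V * infl E r v) ^ 2 := by
  rw [Zval, sinks_remOut, Finset.sum_insert hv, totInfl_remOut_self hacyc]
  congr 1
  refine Finset.sum_congr rfl fun r hr => ?_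
  rw [totInfl_remOut_of_mem_sinks hacyc hr (ne_of_mem_of_not_mem hr hv)]
  ring

end Zval

/-- For a monotone finite DAG, removing the out-edges of a vertex `v` changes
`Z` by at most `2 I(v)/n` downwards: `Z − 2I(v)/n ≤ Z_v ≤ Z`. -/
theorem Zval_remOut_bounds {V : Type*} [Fintype V] [DecidableEq V]
    (E : V → V → Prop) [DecidableRel E] (hacyc : Acyclic E)
    (hmono : MonotoneDigraph E) (v : V) :
    Zval E - 2 * totInfl E v / (Fintype.card V : ℝ) ≤ Zval (remOut E v) ∧
      Zval (remOut E v) ≤ Zval E := by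
  have ha : 0 ≤ totInfl E v / Fintype.card V := by have := totInfl_nonneg (E := E) v; positivity
  rw [mul_div_assoc]
  by_cases hv : v ∈ sinks E
  · rw [Zval_remOut_of_mem_sinks hv]
    constructor <;> linarith
  have hc₀ (r : V) (_ : r ∈ sinks E) : 0 ≤ infl E r v := infl_nonneg r v
  rw [Zval_remOut_of_notMem_sinks hacyc hv]
  constructor
  · refine sum_sq_sub_two_mul_le ha hc₀ (sum_sinks_infl hacyc v) fun r hr => ?_
    exact div_le_one_of_le₀ (totInfl_le_card hacyc hr) (Nat.cast_nonneg _)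
  · refine sq_add_sum_sq_sub_mul_le ha hc₀ (sum_sinks_infl hacyc v) fun r _ => ?_
    rw [mul_div_assoc', mul_div_assoc']
    exact div_le_div_of_nonneg_right (hmono.infl_mul_totInfl_le r v) (Nat.cast_nonneg _)
end

section
/- Let G be a directed forest with n vertices whose trees have roots S, |S| = s. The Two Path mechanism (repeatedly sample two independent random paths from uniform starting vertices; select the first intersection vertex if unmarked, mark all visited vertices of non-intersecting path pairs, return null if intersection is marked) satisfies E[I(selected vertex)] >= 0.09 * n / s, where I(v) is the subtree size of v and the null outcome contributes 0. -/
open Finset MeasureTheory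
open scoped Classical

/-- A directed forest on the vertex type `V`: every vertex has at most one
out-edge, encoded by a parent map whose iterates stabilize (roots are the fixed
points of `parent`, and the edge of a non-root `v` points to `parent v`). -/
structure ParentForest (V : Type*) [Fintype V] where
  parent : V → V
  stab : ∀ v, ∃ k, parent^[k + 1] v = parent^[k] v

namespace ParentForest

variable {V : Type*} [Fintype V]

/-- The roots of the forest. -/
noncomputable def roots (F : ParentForest V) : Finset V :=
  Finset.univ.filter fun v => F.parent v = v

/-- `F.Anc v u` : `v` is an ancestor of `u` (possibly `v = u`). -/
def Anc (F : ParentForest V) (v u : V) : Prop := ∃ k, F.parent^[k] u = v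

/-- `I(v)`: the size of the subtree rooted at `v` (including `v`). -/
noncomputable def subSize (F : ParentForest V) (v : V) : ℕ :=
  (Finset.univ.filter fun u => F.Anc v u).card

/-- The set of vertices of the (deterministic) random path starting at `x`:
all ancestors of `x`, up to the root of its tree. -/
noncomputable def pathSet (F : ParentForest V) (x : V) : Finset V :=
  Finset.univ.filter fun v => F.Anc v x

/-- The two paths starting at `p.1` and `p.2` intersect. -/
def Meets (F : ParentForest V) (p : V × V) : Prop :=
  (F.pathSet p.1 ∩ F.pathSet p.2).Nonempty

/-- `v` is the lowest common ancestor of `x` and `y` (their first intersection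
vertex along the path from `x`). -/
def IsLCA (F : ParentForest V) (v x y : V) : Prop :=
  F.Anc v x ∧ F.Anc v y ∧ ∀ w, F.Anc w x → F.Anc w y → F.Anc w v

/-- The influence of the outcome of the Two Path mechanism run on the sequence
of pairs of starting vertices `f 0, f 1, …`: at the first round `k` whose two
paths intersect, the first intersection vertex is selected if it was not marked
in any earlier (non-intersecting) round, and the outcome is its subtree size;
in all other cases (intersection at a marked vertex, or no round with
intersecting paths) the outcome contributes `0`. -/
noncomputable def outcomeVal (F : ParentForest V) (f : ℕ → V × V) : ℝ :=
  if h : ∃ k, F.Meets (f k) then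
    ∑ v ∈ Finset.univ.filter (fun v =>
        F.IsLCA v (f (Nat.find h)).1 (f (Nat.find h)).2 ∧
        v ∉ (Finset.range (Nat.find h)).biUnion
          (fun i => F.pathSet (f i).1 ∪ F.pathSet (f i).2)),
      (F.subSize v : ℝ)
  else 0

end ParentForest

open ProbabilityTheory
open scoped ENNReal

/-!
Let `n = |V|`, let `M` be the number of ordered pairs of vertices in a common tree, and let `H` be
the set of those pairs `p` with `M ≤ 2 n I(lca p)`. For `p ∈ H` with `v = lca p`, consider the
event that the first round which stops the mechanism or marks `v` is a round with pair `p`. Rounds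
are i.i.d. uniform, so this event has probability `1 / #{pairs that stop or mark v}`, which is at
least `1 / (M + 2 n I(v))`, and on it the outcome is `I(v)`. These events are disjoint, so the
expectation is at least `∑_{p ∈ H} I(v) / (M + 2 n I(v)) ≥ |H| / (4n)`.

The meeting pairs outside `H` lie inside the subtrees of the topmost vertices `ℓ` with
`2 n I(ℓ) < M`. These subtrees are disjoint, so there are at most `∑ I(ℓ)² ≤ M / 2` such pairs, and
`|H| ≥ M / 2`. Finally `n² ≤ s M` by Cauchy–Schwarz over the trees, so the expectation is at least
`M / (8n) ≥ n / (8s)`.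

The variables `X i` are not assumed measurable, but uniformity forces them to be a.e. measurable.
By independence their joint law is then the infinite product of uniform laws, and the computation
takes place on that sequence space.
-/

section UniformSequences

def escapeAt {α : Type*} (A : Finset α) (p : α) (k : ℕ) : Set (ℕ → α) :=
  {f | (∀ i < k, f i ∈ A) ∧ f k = p}

theorem escapeAt_eq_pi {α : Type*} (A : Finset α) (p : α) (k : ℕ) :
    escapeAt A p k =
      Set.pi (range (k + 1) : Set ℕ) fun i => if i < k then (A : Set α) else {p} := by
  ext f
  simp only [escapeAt, Set.mem_pi, coe_range, Set.mem_Iio]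
  constructor
  · rintro ⟨hA, rfl⟩ i hi
    split_ifs with h
    · exact hA i h
    · rw [show i = k by omega, Set.mem_singleton_iff]
  · intro h
    exact ⟨fun i hi => by simpa [hi] using h i (by omega), by simpa using h k (by omega)⟩

variable {α : Type*} [MeasurableSpace α] [MeasurableSingletonClass α]

theorem measurableSet_escapeAt (A : Finset α) (p : α) (k : ℕ) :
    MeasurableSet (escapeAt A p k) := by
  rw [escapeAt_eq_pi]
  refine MeasurableSet.pi (Set.to_countable _) fun i _ => ?_
  split_ifs
  exacts [A.measurableSet, measurableSet_singleton p]

variable [Fintype α] [Nonempty α]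

theorem infinitePi_uniformOn_escapeAt (A : Finset α) (p : α) (k : ℕ) :
    Measure.infinitePi (fun _ => uniformOn Set.univ) (escapeAt A p k) =
      (#A / Fintype.card α) ^ k * (Fintype.card α : ℝ≥0∞)⁻¹ := by
  have hmeas : ∀ i ∈ range (k + 1), MeasurableSet (if i < k then (A : Set α) else {p}) :=
    fun i _ => by split_ifs; exacts [A.measurableSet, measurableSet_singleton p]
  rw [escapeAt_eq_pi, Measure.infinitePi_pi _ hmeas, prod_range_succ, if_neg (lt_irrefl k),
    prod_congr rfl fun i hi => by rw [if_pos (mem_range.1 hi)], prod_const, card_range]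
  simp [uniformOn_univ, ENNReal.div_eq_inv_mul]

/-- The first entry outside `A` of a uniform random sequence is uniform on `Aᶜ`. -/
theorem infinitePi_uniformOn_iUnion_escapeAt [DecidableEq α] {A : Finset α} {p : α} (hp : p ∉ A) :
    Measure.infinitePi (fun _ => uniformOn Set.univ) (⋃ k, escapeAt A p k) =
      (#Aᶜ : ℝ≥0∞)⁻¹ := by
  have hdisj : Pairwise fun k k' => Disjoint (escapeAt A p k) (escapeAt A p k') :=
    (pairwise_disjoint_on _).2 fun k k' hkk' => Set.disjoint_left.2 fun f hf hf' =>
      hp (hf.2 ▸ hf'.1 k hkk')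
  have hN : (Fintype.card α : ℝ≥0∞) ≠ 0 := by simp
  rw [measure_iUnion hdisj (measurableSet_escapeAt A p)]
  simp_rw [infinitePi_uniformOn_escapeAt]
  rw [ENNReal.tsum_mul_right, ENNReal.tsum_geometric, ← ENNReal.mul_inv (by simp) (by simp),
    ENNReal.sub_mul (by simp), one_mul, ENNReal.div_mul_cancel hN (by simp), card_compl,
    ENNReal.natCast_sub]

end UniformSequences

theorem sum_mul_measureReal_le_integral {Ω ι : Type*} [MeasurableSpace Ω] {μ : Measure Ω}
    [IsFiniteMeasure μ] {s : Finset ι} {E : ι → Set Ω} {c : ι → ℝ} {g : Ω → ℝ}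
    (hE : ∀ i ∈ s, MeasurableSet (E i)) (hdisj : (s : Set ι).PairwiseDisjoint E)
    (hg : Integrable g μ) (hg0 : ∀ x, 0 ≤ g x) (hc : ∀ i ∈ s, ∀ x ∈ E i, c i ≤ g x) :
    ∑ i ∈ s, c i * μ.real (E i) ≤ ∫ x, g x ∂μ := by
  have hint : ∀ i ∈ s, Integrable ((E i).indicator fun _ => c i) μ :=
    fun i hi => (integrable_const _).indicator (hE i hi)
  calc ∑ i ∈ s, c i * μ.real (E i) = ∫ x, ∑ i ∈ s, (E i).indicator (fun _ => c i) x ∂μ := by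
        rw [integral_finsetSum _ hint]
        exact sum_congr rfl fun i hi => by
          rw [integral_indicator_const _ (hE i hi), smul_eq_mul, mul_comm]
    _ ≤ ∫ x, g x ∂μ := integral_mono (integrable_finsetSum _ hint) hg fun x => by
        by_cases hx : ∃ i ∈ s, x ∈ E i
        · obtain ⟨i, hi, hxi⟩ := hx
          rw [sum_eq_single_of_mem i hi fun j hj hji => Set.indicator_of_notMem
            (fun hxj => hji (hdisj.elim_set hj hi x hxj hxi)) _, Set.indicator_of_mem hxi]
          exact hc i hi x hxi
        · push Not at hx
          rw [sum_eq_zero fun i hi => Set.indicator_of_notMem (hx i hi) _]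
          exact hg0 x

section NullMeasurable

variable {Ω : Type*} [MeasurableSpace Ω] {μ : Measure Ω} [IsFiniteMeasure μ]

/-- Carathéodory's criterion, tested on the whole space. -/
theorem nullMeasurableSet_of_measure_add_measure_compl_le {s : Set Ω}
    (h : μ s + μ sᶜ ≤ μ Set.univ) : NullMeasurableSet s μ := by
  set B := toMeasurable μ s
  have hB : MeasurableSet B := measurableSet_toMeasurable μ s
  have hsB : s ⊆ B := subset_toMeasurable μ s
  have hnull : μ (B \ s) = 0 := by
    have hcompl : μ sᶜ = μ (B \ s) + μ Bᶜ := by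
      have hBc : sᶜ \ B = Bᶜ := by
        ext x
        simp only [Set.mem_sdiff, Set.mem_compl_iff]
        exact ⟨fun h => h.2, fun h => ⟨fun hs => h (hsB hs), h⟩⟩
      rw [← measure_inter_add_sdiff sᶜ hB, Set.inter_comm, ← Set.sdiff_eq, hBc]
    refine nonpos_iff_eq_zero.1 (ENNReal.le_of_add_le_add_left (measure_ne_top μ Set.univ) ?_)
    calc μ Set.univ + μ (B \ s) = μ s + μ sᶜ := by
          rw [hcompl, ← measure_add_measure_compl hB, measure_toMeasurable]
          ac_rfl
      _ ≤ μ Set.univ + 0 := by rwa [add_zero]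
  exact hB.nullMeasurableSet.congr (ae_eq_set.2 ⟨hnull, by simp [Set.sdiff_eq_empty.2 hsB]⟩)

theorem nullMeasurable_of_sum_measure_preimage_singleton_le {β : Type*} [Fintype β]
    [MeasurableSpace β] {f : Ω → β} (h : ∑ b, μ (f ⁻¹' {b}) ≤ μ Set.univ) :
    NullMeasurable f μ := by
  have hfiber : ∀ b, NullMeasurableSet (f ⁻¹' {b}) μ := fun b =>
    nullMeasurableSet_of_measure_add_measure_compl_le <| calc
      μ (f ⁻¹' {b}) + μ (f ⁻¹' {b})ᶜ ≤ μ (f ⁻¹' {b}) + ∑ c ∈ univ.erase b, μ (f ⁻¹' {c}) := by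
          gcongr
          refine (measure_mono fun ω hω => ?_).trans (measure_biUnion_finset_le _ _)
          exact Set.mem_biUnion (mem_erase.2 ⟨hω, mem_univ _⟩) rfl
      _ ≤ μ Set.univ := (add_sum_erase univ (fun c => μ (f ⁻¹' {c})) (mem_univ b)).trans_le h
  intro t _
  rw [← Set.biUnion_preimage_singleton]
  exact .biUnion (Set.to_countable t) fun b _ => hfiber b

end NullMeasurable

namespace ParentForest

variable {V : Type*} [Fintype V] (F : ParentForest V)

section Ancestors

theorem anc_trans {u v w : V} (huv : F.Anc u v) (hvw : F.Anc v w) : F.Anc u w := by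
  obtain ⟨a, rfl⟩ := huv
  obtain ⟨b, rfl⟩ := hvw
  exact ⟨a + b, Function.iterate_add_apply _ _ _ _⟩

theorem anc_total {v w u : V} (hv : F.Anc v u) (hw : F.Anc w u) : F.Anc v w ∨ F.Anc w v := by
  obtain ⟨a, rfl⟩ := hv
  obtain ⟨b, rfl⟩ := hw
  rcases le_total a b with hab | hba
  · exact Or.inr ⟨b - a, by rw [← Function.iterate_add_apply, Nat.sub_add_cancel hab]⟩
  · exact Or.inl ⟨a - b, by rw [← Function.iterate_add_apply, Nat.sub_add_cancel hba]⟩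

theorem eq_of_anc_of_parent_eq_self {v r : V} (hr : F.parent r = r) (h : F.Anc v r) : v = r := by
  obtain ⟨k, rfl⟩ := h
  exact Function.iterate_fixed hr k

theorem anc_parent_of_anc_of_ne {v w : V} (h : F.Anc v w) (hne : v ≠ w) :
    F.Anc v (F.parent w) := by
  obtain ⟨_ | k, rfl⟩ := h
  · exact absurd rfl hne
  · exact ⟨k, (Function.iterate_succ_apply _ _ _).symm⟩

theorem parent_eq_self_of_iterate_eq_self {k : ℕ} (hk : 0 < k) {v : V}
    (h : F.parent^[k] v = v) : F.parent v = v := by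
  obtain ⟨c, hc⟩ := F.stab v
  have hfix : F.parent (F.parent^[c] v) = F.parent^[c] v := by
    rwa [← Function.iterate_succ_apply' F.parent]
  have hv : F.parent^[c] v = v :=
    calc F.parent^[c] v = F.parent^[k * c - c] (F.parent^[c] v) :=
          (Function.iterate_fixed hfix _).symm
      _ = F.parent^[k * c] v := by
          rw [← Function.iterate_add_apply, Nat.sub_add_cancel (Nat.le_mul_of_pos_left c hk)]
      _ = v := by rw [Function.iterate_mul]; exact Function.iterate_fixed h c
  exact hv ▸ hfix

theorem anc_antisymm {v w : V} (hvw : F.Anc v w) (hwv : F.Anc w v) : v = w := by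
  obtain ⟨a, rfl⟩ := hvw
  obtain ⟨b, hb⟩ := hwv
  rcases Nat.eq_zero_or_pos a with rfl | ha
  · rfl
  · rw [← Function.iterate_add_apply] at hb
    exact Function.iterate_fixed (F.parent_eq_self_of_iterate_eq_self (by omega) hb) a

noncomputable def rootOf (v : V) : V := F.parent^[(F.stab v).choose] v

theorem parent_rootOf (v : V) : F.parent (F.rootOf v) = F.rootOf v := by
  rw [rootOf, ← Function.iterate_succ_apply' F.parent]
  exact (F.stab v).choose_spec

theorem anc_rootOf (v : V) : F.Anc (F.rootOf v) v := ⟨_, rfl⟩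

theorem rootOf_mem_roots (v : V) : F.rootOf v ∈ F.roots := by
  simp [roots, F.parent_rootOf v]

theorem eq_rootOf_of_anc {r v : V} (hr : F.parent r = r) (h : F.Anc r v) : r = F.rootOf v := by
  rcases F.anc_total h (F.anc_rootOf v) with h' | h'
  · exact F.eq_of_anc_of_parent_eq_self (F.parent_rootOf v) h'
  · exact (F.eq_of_anc_of_parent_eq_self hr h').symm

theorem rootOf_eq_of_anc {w v : V} (h : F.Anc w v) : F.rootOf w = F.rootOf v :=
  F.eq_rootOf_of_anc (F.parent_rootOf w) (F.anc_trans (F.anc_rootOf w) h)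

theorem mem_pathSet {v x : V} : v ∈ F.pathSet x ↔ F.Anc v x := by
  simp [pathSet]

theorem meets_iff_rootOf_eq {p : V × V} : F.Meets p ↔ F.rootOf p.1 = F.rootOf p.2 := by
  constructor
  · rintro ⟨w, hw⟩
    rw [mem_inter, mem_pathSet, mem_pathSet] at hw
    rw [← F.rootOf_eq_of_anc hw.1, F.rootOf_eq_of_anc hw.2]
  · intro h
    refine ⟨F.rootOf p.1, mem_inter.2 ⟨F.mem_pathSet.2 (F.anc_rootOf _), ?_⟩⟩
    exact F.mem_pathSet.2 (h ▸ F.anc_rootOf _)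

def IsTopmost (P : V → Prop) (ℓ : V) : Prop := P ℓ ∧ (F.parent ℓ = ℓ ∨ ¬ P (F.parent ℓ))

theorem exists_isTopmost_anc {P : V → Prop} {u : V} (hu : P u) :
    ∃ ℓ, F.Anc ℓ u ∧ F.IsTopmost P ℓ := by
  have hex : ∃ j, ¬ P (F.parent^[j + 1] u) ∨ F.parent^[j + 1] u = F.parent^[j] u :=
    (F.stab u).imp fun _ => Or.inr
  refine ⟨F.parent^[Nat.find hex] u, ⟨_, rfl⟩, ?_, ?_⟩
  · rcases h : Nat.find hex with _ | j
    · exact hu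
    · have := Nat.find_min hex (show j < Nat.find hex by omega)
      exact not_not.1 (not_or.1 this).1
  · rw [← Function.iterate_succ_apply' F.parent]
    exact (Nat.find_spec hex).symm

noncomputable def subtree (v : V) : Finset V := {u | F.Anc v u}

theorem card_subtree (v : V) : #(F.subtree v) = F.subSize v := rfl

theorem mem_subtree {v u : V} : u ∈ F.subtree v ↔ F.Anc v u := by
  simp [subtree]

theorem subSize_le_subSize_of_anc {a b : V} (h : F.Anc a b) : F.subSize b ≤ F.subSize a :=
  card_le_card fun _ hu => F.mem_subtree.2 (F.anc_trans h (F.mem_subtree.1 hu))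

theorem disjoint_subtree_of_isTopmost {P : V → Prop} (hP : ∀ a b, F.Anc a b → P a → P b)
    {ℓ₁ ℓ₂ : V} (h₁ : F.IsTopmost P ℓ₁) (h₂ : F.IsTopmost P ℓ₂) (hne : ℓ₁ ≠ ℓ₂) :
    Disjoint (F.subtree ℓ₁) (F.subtree ℓ₂) := by
  refine disjoint_left.2 fun z hz₁ hz₂ => ?_
  rw [mem_subtree] at hz₁ hz₂
  wlog h : F.Anc ℓ₁ ℓ₂ generalizing ℓ₁ ℓ₂
  · exact this h₂ h₁ hne.symm hz₂ hz₁ ((F.anc_total hz₁ hz₂).resolve_left h)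
  rcases h₂.2 with hroot | hlight
  · exact hne (F.eq_of_anc_of_parent_eq_self hroot h)
  · exact hlight (hP _ _ (F.anc_parent_of_anc_of_ne h hne) h₁.1)

end Ancestors

noncomputable def lcaOf (x y : V) : V :=
  if h : ∃ k, F.Anc (F.parent^[k] x) y then F.parent^[Nat.find h] x else x

theorem isLCA_lcaOf {x y : V} (hm : F.Meets (x, y)) : F.IsLCA (F.lcaOf x y) x y := by
  obtain ⟨w, hw⟩ := hm
  rw [mem_inter, mem_pathSet, mem_pathSet] at hw
  have hex : ∃ k, F.Anc (F.parent^[k] x) y := by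
    obtain ⟨a, ha⟩ := hw.1
    exact ⟨a, ha ▸ hw.2⟩
  rw [lcaOf, dif_pos hex]
  refine ⟨⟨_, rfl⟩, Nat.find_spec hex, fun u ⟨a, ha⟩ huy => ⟨a - Nat.find hex, ?_⟩⟩
  rw [← Function.iterate_add_apply, Nat.sub_add_cancel (Nat.find_min' hex (ha ▸ huy)), ha]

variable {F} in
theorem IsLCA.unique {v w x y : V} (hv : F.IsLCA v x y) (hw : F.IsLCA w x y) : v = w :=
  F.anc_antisymm (hw.2.2 v hv.1 hv.2.1) (hv.2.2 w hw.1 hw.2.1)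

section Counting

noncomputable def meetingPairs : Finset (V × V) := {p | F.Meets p}

theorem card_sq_le_card_roots_mul_card_meetingPairs :
    Fintype.card V ^ 2 ≤ #F.roots * #F.meetingPairs := by
  let tree (ρ : V) : Finset V := {x | F.rootOf x = ρ}
  have hV : Fintype.card V = ∑ ρ ∈ F.roots, #(tree ρ) :=
    card_eq_sum_card_fiberwise fun x _ => F.rootOf_mem_roots x
  have hM : #F.meetingPairs = ∑ ρ ∈ F.roots, #(tree ρ) ^ 2 := by
    rw [card_eq_sum_card_fiberwise (f := fun p => F.rootOf p.1)
      fun p _ => F.rootOf_mem_roots p.1]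
    refine sum_congr rfl fun ρ _ => ?_
    rw [sq, ← card_product]
    congr 1
    ext p
    simp only [meetingPairs, mem_filter, mem_univ, true_and, mem_product, tree,
      F.meets_iff_rootOf_eq]
    constructor
    · rintro ⟨h, rfl⟩
      exact ⟨rfl, h.symm⟩
    · rintro ⟨rfl, h⟩
      exact ⟨h.symm, rfl⟩
  rw [hV, hM]
  exact sq_sum_le_card_mul_sum_sq

theorem card_meetingPairs_filter_lcaOf_light_mul_le (c d : ℕ) :
    #{p ∈ F.meetingPairs | c * F.subSize (F.lcaOf p.1 p.2) < d} * c ≤ d * Fintype.card V := by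
  let P : V → Prop := fun v => c * F.subSize v < d
  have hP : ∀ a b, F.Anc a b → P a → P b := fun a b hab ha =>
    lt_of_le_of_lt (Nat.mul_le_mul_left c (F.subSize_le_subSize_of_anc hab)) ha
  let L : Finset V := {ℓ | F.IsTopmost P ℓ}
  have hdisj : (L : Set V).PairwiseDisjoint F.subtree := fun ℓ₁ h₁ ℓ₂ h₂ hne =>
    F.disjoint_subtree_of_isTopmost hP (mem_filter.1 h₁).2 (mem_filter.1 h₂).2 hne
  have hcover : {p ∈ F.meetingPairs | P (F.lcaOf p.1 p.2)} ⊆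
      L.biUnion fun ℓ => F.subtree ℓ ×ˢ F.subtree ℓ := by
    intro p hp
    simp only [meetingPairs, mem_filter, mem_univ, true_and] at hp
    obtain ⟨ℓ, hℓ, htop⟩ := F.exists_isTopmost_anc hp.2
    have hlca := F.isLCA_lcaOf hp.1
    exact mem_biUnion.2 ⟨ℓ, mem_filter.2 ⟨mem_univ _, htop⟩,
      mem_product.2 ⟨F.mem_subtree.2 (F.anc_trans hℓ hlca.1),
        F.mem_subtree.2 (F.anc_trans hℓ hlca.2.1)⟩⟩
  calc #{p ∈ F.meetingPairs | P (F.lcaOf p.1 p.2)} * c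
      ≤ (∑ ℓ ∈ L, F.subSize ℓ * F.subSize ℓ) * c := by
        gcongr
        refine (card_le_card hcover).trans (card_biUnion_le.trans_eq ?_)
        simp only [card_product, card_subtree]
    _ = ∑ ℓ ∈ L, c * F.subSize ℓ * F.subSize ℓ := by
        rw [sum_mul]
        exact sum_congr rfl fun _ _ => by ring
    _ ≤ ∑ ℓ ∈ L, d * F.subSize ℓ :=
        sum_le_sum fun ℓ hℓ => Nat.mul_le_mul_right _ (mem_filter.1 hℓ).2.1.le
    _ = d * #(L.biUnion F.subtree) := by
        rw [card_biUnion hdisj, mul_sum]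
        rfl
    _ ≤ d * Fintype.card V := Nat.mul_le_mul_left d (card_le_univ _)

/-- The pairs of starting vertices whose round of the mechanism neither stops it nor marks `v`. -/
noncomputable def safePairs (v : V) : Finset (V × V) :=
  {q | ¬ F.Meets q ∧ v ∉ F.pathSet q.1 ∪ F.pathSet q.2}

theorem card_compl_safePairs_le (v : V) :
    #(F.safePairs v)ᶜ ≤ #F.meetingPairs + 2 * F.subSize v * Fintype.card V := by
  have hsub : (F.safePairs v)ᶜ ⊆
      F.meetingPairs ∪ F.subtree v ×ˢ univ ∪ univ ×ˢ F.subtree v := by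
    intro q hq
    simp only [safePairs, compl_filter, mem_filter, mem_univ, true_and, not_and_or, not_not,
      mem_union, mem_pathSet] at hq
    simp only [meetingPairs, mem_union, mem_filter, mem_univ, true_and, mem_product,
      mem_subtree, and_true]
    tauto
  calc #(F.safePairs v)ᶜ ≤ #(F.meetingPairs ∪ F.subtree v ×ˢ univ ∪ univ ×ˢ F.subtree v) :=
        card_le_card hsub
    _ ≤ #F.meetingPairs + #(F.subtree v ×ˢ (univ : Finset V)) +
          #((univ : Finset V) ×ˢ F.subtree v) :=
        (card_union_le _ _).trans (Nat.add_le_add_right (card_union_le _ _) _)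
    _ = _ := by
        simp only [card_product, card_univ, card_subtree]
        ring

noncomputable def heavyPairs : Finset (V × V) :=
  {p ∈ F.meetingPairs | #F.meetingPairs ≤ 2 * Fintype.card V * F.subSize (F.lcaOf p.1 p.2)}

theorem card_meetingPairs_le_two_mul_card_heavyPairs [Nonempty V] :
    #F.meetingPairs ≤ 2 * #F.heavyPairs := by
  set n := Fintype.card V
  set M := #F.meetingPairs
  have hbound := F.card_meetingPairs_filter_lcaOf_light_mul_le (2 * n) M
  set light := #{p ∈ F.meetingPairs | 2 * n * F.subSize (F.lcaOf p.1 p.2) < M}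
  have hsplit : #F.heavyPairs +
      #{p ∈ F.meetingPairs | ¬ M ≤ 2 * n * F.subSize (F.lcaOf p.1 p.2)} = M :=
    card_filter_add_card_filter_not _
  have hlight : #{p ∈ F.meetingPairs | ¬ M ≤ 2 * n * F.subSize (F.lcaOf p.1 p.2)} = light := by
    simp only [not_le, light]
  have : light * 2 ≤ M := Nat.le_of_mul_le_mul_right
    (by linarith) (Fintype.card_pos : 0 < n)
  omega

end Counting

section Mechanism

variable {F}

def FirstMeetAt (f : ℕ → V × V) (k : ℕ) : Prop := (∀ i < k, ¬ F.Meets (f i)) ∧ F.Meets (f k)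

theorem FirstMeetAt.unique {f : ℕ → V × V} {j k : ℕ} (hj : F.FirstMeetAt f j)
    (hk : F.FirstMeetAt f k) : j = k := by
  by_contra hne
  rcases lt_or_gt_of_ne hne with h | h
  · exact hk.1 j h hj.2
  · exact hj.1 k h hk.2

theorem exists_firstMeetAt_le {f : ℕ → V × V} {k : ℕ} (hk : F.Meets (f k)) :
    ∃ j ≤ k, F.FirstMeetAt f j :=
  have hex : ∃ j, F.Meets (f j) := ⟨k, hk⟩
  ⟨Nat.find hex, Nat.find_min' hex hk, fun _ => Nat.find_min hex, Nat.find_spec hex⟩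

theorem outcomeVal_eq_of_firstMeetAt {f : ℕ → V × V} {k : ℕ} (hk : F.FirstMeetAt f k) :
    F.outcomeVal f = ∑ v ∈ univ.filter (fun v => F.IsLCA v (f k).1 (f k).2 ∧
      v ∉ (range k).biUnion fun i => F.pathSet (f i).1 ∪ F.pathSet (f i).2), (F.subSize v : ℝ) := by
  have hex : ∃ k, F.Meets (f k) := ⟨k, hk.2⟩
  have hfind : Nat.find hex = k :=
    FirstMeetAt.unique ⟨fun _ => Nat.find_min hex, Nat.find_spec hex⟩ hk
  rw [outcomeVal, dif_pos hex, hfind]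

theorem outcomeVal_eq_zero {f : ℕ → V × V} (hf : ∀ k, ¬ F.Meets (f k)) : F.outcomeVal f = 0 := by
  rw [outcomeVal, dif_neg (not_exists.2 hf)]

theorem outcomeVal_congr {f g : ℕ → V × V} {k : ℕ} (hk : F.FirstMeetAt f k)
    (hfg : ∀ i ≤ k, f i = g i) : F.outcomeVal f = F.outcomeVal g := by
  have hgk : F.FirstMeetAt g k :=
    ⟨fun i hi => hfg i hi.le ▸ hk.1 i hi, hfg k le_rfl ▸ hk.2⟩
  rw [outcomeVal_eq_of_firstMeetAt hk, outcomeVal_eq_of_firstMeetAt hgk, hfg k le_rfl,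
    biUnion_congr rfl fun i hi => by rw [hfg i (mem_range.1 hi).le]]

theorem outcomeVal_nonneg (f : ℕ → V × V) : 0 ≤ F.outcomeVal f := by
  rw [outcomeVal]
  split
  · exact sum_nonneg fun _ _ => Nat.cast_nonneg _
  · exact le_rfl

theorem outcomeVal_le (f : ℕ → V × V) : F.outcomeVal f ≤ Fintype.card V * Fintype.card V := by
  rw [outcomeVal]
  split
  · calc _ ≤ ∑ _v ∈ univ.filter _, (Fintype.card V : ℝ) :=
          sum_le_sum fun v _ => by exact_mod_cast card_le_univ _
      _ ≤ _ := by
          rw [sum_const, nsmul_eq_mul]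
          gcongr
          exact_mod_cast card_le_univ _
  · positivity

theorem firstMeetAt_of_mem_escapeAt {f : ℕ → V × V} {p : V × V} {k : ℕ} (hp : F.Meets p)
    (hf : f ∈ escapeAt (F.safePairs (F.lcaOf p.1 p.2)) p k) : F.FirstMeetAt f k :=
  ⟨fun i hi => (mem_filter.1 (hf.1 i hi)).2.1, hf.2 ▸ hp⟩

variable (F) in
/-- The runs in which the first round that stops the mechanism or marks `lca p` has pair `p`. -/
noncomputable def selectEvent (p : V × V) : Set (ℕ → V × V) :=
  ⋃ k, escapeAt (F.safePairs (F.lcaOf p.1 p.2)) p k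

theorem outcomeVal_eq_of_mem_selectEvent {f : ℕ → V × V} {p : V × V} (hp : F.Meets p)
    (hf : f ∈ F.selectEvent p) : F.outcomeVal f = F.subSize (F.lcaOf p.1 p.2) := by
  obtain ⟨k, hk⟩ := Set.mem_iUnion.1 hf
  rw [outcomeVal_eq_of_firstMeetAt (firstMeetAt_of_mem_escapeAt hp hk), hk.2]
  convert sum_singleton (fun v => (F.subSize v : ℝ)) (F.lcaOf p.1 p.2)
  ext v
  simp only [mem_filter, mem_univ, true_and, mem_singleton, mem_biUnion, mem_range, not_exists,
    not_and]
  constructor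
  · exact fun h => h.1.unique (F.isLCA_lcaOf hp)
  · rintro rfl
    exact ⟨F.isLCA_lcaOf hp, fun i hi => (mem_filter.1 (hk.1 i hi)).2.2⟩

variable (F) in
theorem pairwiseDisjoint_selectEvent :
    (F.meetingPairs : Set (V × V)).PairwiseDisjoint F.selectEvent := by
  intro p hp p' hp' hne
  refine Set.disjoint_left.2 fun f hf hf' => hne ?_
  obtain ⟨k, hk⟩ := Set.mem_iUnion.1 hf
  obtain ⟨k', hk'⟩ := Set.mem_iUnion.1 hf'
  have hp := (mem_filter.1 hp).2
  have hp' := (mem_filter.1 hp').2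
  rw [← hk.2, ← hk'.2, (firstMeetAt_of_mem_escapeAt hp hk).unique
    (firstMeetAt_of_mem_escapeAt hp' hk')]

end Mechanism

section Expectation

variable [MeasurableSpace (V × V)] [MeasurableSingletonClass (V × V)]

/-- The outcome is decided by the first meeting round, so it is the pointwise limit of its
truncations to the first `K + 1` rounds, each a function of finitely many coordinates. -/
theorem measurable_outcomeVal : Measurable F.outcomeVal := by
  let trunc (K : ℕ) (f : ℕ → V × V) : ℝ := if ∃ k ≤ K, F.Meets (f k) then F.outcomeVal f else 0
  have htrunc : ∀ K f g, (∀ i ≤ K, f i = g i) → trunc K f = trunc K g := by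
    intro K f g hfg
    by_cases h : ∃ k ≤ K, F.Meets (f k)
    · obtain ⟨k, hkK, hk⟩ := h
      obtain ⟨j, hjk, hj⟩ := exists_firstMeetAt_le hk
      have hg : ∃ k ≤ K, F.Meets (g k) := ⟨k, hkK, hfg k hkK ▸ hk⟩
      simp only [trunc, if_pos hg, if_pos (⟨k, hkK, hk⟩ : ∃ k ≤ K, F.Meets (f k))]
      exact outcomeVal_congr hj fun i hi => hfg i (by omega)
    · have hg : ¬ ∃ k ≤ K, F.Meets (g k) := fun ⟨k, hkK, hk⟩ => h ⟨k, hkK, hfg k hkK ▸ hk⟩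
      simp only [trunc, if_neg h, if_neg hg]
  refine measurable_of_tendsto_metrizable (f := trunc) (fun K => ?_) (tendsto_pi_nhds.2 fun f => ?_)
  · let extend (g : Fin (K + 1) → V × V) (i : ℕ) : V × V :=
      if h : i < K + 1 then g ⟨i, h⟩ else g 0
    have hfactor : trunc K = (fun g => trunc K (extend g)) ∘ fun f (i : Fin (K + 1)) => f i :=
      funext fun f => htrunc K _ _ fun i hi => by simp only [extend, dif_pos (Nat.lt_succ_of_le hi)]
    rw [hfactor]
    exact (measurable_of_countable _).comp (measurable_pi_lambda _ fun i => measurable_pi_apply _)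
  · by_cases h : ∃ k, F.Meets (f k)
    · obtain ⟨k, hk⟩ := h
      exact tendsto_atTop_of_eventually_const (i₀ := k) fun K hK => if_pos ⟨k, hK, hk⟩
    · push Not at h
      simp only [trunc, outcomeVal_eq_zero h, ite_self, tendsto_const_nhds]

theorem integrable_outcomeVal (P : Measure (ℕ → V × V)) [IsFiniteMeasure P] :
    Integrable F.outcomeVal P :=
  .of_bound F.measurable_outcomeVal.aestronglyMeasurable _ <| ae_of_all _ fun f => by
    rw [Real.norm_of_nonneg (outcomeVal_nonneg f)]
    exact outcomeVal_le f

theorem one_div_le_subSize_mul_measureReal_selectEvent [Nonempty V] {p : V × V}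
    (hp : p ∈ F.heavyPairs) :
    (1 : ℝ) / (4 * Fintype.card V) ≤ F.subSize (F.lcaOf p.1 p.2) *
      (Measure.infinitePi fun _ : ℕ => uniformOn (Set.univ : Set (V × V))).real
        (F.selectEvent p) := by
  obtain ⟨hmeet, hheavy⟩ := mem_filter.1 hp
  set v := F.lcaOf p.1 p.2
  have hpA : p ∉ F.safePairs v := fun h => (mem_filter.1 h).2.1 (mem_filter.1 hmeet).2
  have hcard := F.card_compl_safePairs_le v
  have hpos : 0 < #(F.safePairs v)ᶜ := card_pos.2 ⟨p, mem_compl.2 hpA⟩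
  have hn : (0 : ℝ) < Fintype.card V := by exact_mod_cast Fintype.card_pos
  rw [measureReal_def, selectEvent, infinitePi_uniformOn_iUnion_escapeAt hpA, ENNReal.toReal_inv,
    ENNReal.toReal_natCast, ← div_eq_mul_inv, div_le_div_iff₀ (by positivity)
    (by exact_mod_cast hpos)]
  exact_mod_cast (by nlinarith : 1 * #(F.safePairs v)ᶜ ≤ F.subSize v * (4 * Fintype.card V))

theorem card_div_le_integral_outcomeVal [Nonempty V] :
    (Fintype.card V : ℝ) / (8 * #F.roots) ≤
      ∫ f, F.outcomeVal f ∂Measure.infinitePi fun _ : ℕ => uniformOn (Set.univ : Set (V × V)) := by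
  set P := Measure.infinitePi fun _ : ℕ => uniformOn (Set.univ : Set (V × V))
  set n := Fintype.card V
  set M := #F.meetingPairs
  have hn : (0 : ℝ) < n := by exact_mod_cast Fintype.card_pos
  have hs : 0 < #F.roots := card_pos.2 ⟨_, F.rootOf_mem_roots (Classical.arbitrary V)⟩
  have hCS : (n : ℝ) ^ 2 ≤ #F.roots * M := by
    exact_mod_cast F.card_sq_le_card_roots_mul_card_meetingPairs
  have hH : (M : ℝ) ≤ 2 * #F.heavyPairs := by
    exact_mod_cast F.card_meetingPairs_le_two_mul_card_heavyPairs
  have hint := sum_mul_measureReal_le_integral (s := F.heavyPairs)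
    (fun p _ => .iUnion fun k => measurableSet_escapeAt _ p k)
    (F.pairwiseDisjoint_selectEvent.subset (filter_subset _ _)) (F.integrable_outcomeVal P)
    outcomeVal_nonneg
    fun p hp f hf => (outcomeVal_eq_of_mem_selectEvent (mem_filter.1 (mem_filter.1 hp).1).2 hf).ge
  calc (n : ℝ) / (8 * #F.roots) ≤ M / (8 * n) := by
        rw [div_le_div_iff₀ (by positivity) (by positivity)]
        nlinarith
    _ ≤ #F.heavyPairs • ((1 : ℝ) / (4 * n)) := by
        rw [nsmul_eq_mul, mul_one_div, div_le_div_iff₀ (by positivity) (by positivity)]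
        nlinarith
    _ ≤ _ := (card_nsmul_le_sum _ _ _ fun p hp =>
        F.one_div_le_subSize_mul_measureReal_selectEvent hp).trans hint

end Expectation

end ParentForest

/-- For a directed forest with `n` vertices and `s` roots, the Two Path
mechanism (driven by an i.i.d. sequence of uniformly random pairs of starting
vertices) selects a vertex of expected influence at least `0.09 · n / s`. -/
theorem two_path_forest_expectation {V : Type*} [Fintype V] [Nonempty V]
    (F : ParentForest V) {Ω : Type*} [MeasurableSpace Ω] (μ : Measure Ω)
    [IsProbabilityMeasure μ] (X : ℕ → Ω → V × V)
    (hindep : ProbabilityTheory.iIndepFun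
      (m := fun _ => (⊤ : MeasurableSpace (V × V))) X μ)
    (hunif : ∀ i, ∀ p : V × V,
      μ {ω | X i ω = p} = 1 / (Fintype.card (V × V) : ENNReal)) :
    (0.09 : ℝ) * (Fintype.card V : ℝ) / (F.roots.card : ℝ) ≤
      ∫ ω, F.outcomeVal (fun i => X i ω) ∂μ := by
  let _ : MeasurableSpace (V × V) := ⊤
  have hX : ∀ i, AEMeasurable (X i) μ := fun i =>
    (nullMeasurable_of_sum_measure_preimage_singleton_le <| le_of_eq <|
      (sum_congr rfl fun p _ => hunif i p).trans <| by
        rw [sum_const, card_univ, nsmul_eq_mul,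
          ENNReal.mul_div_cancel' (by simp) (by simp [ENNReal.mul_eq_top]),
          measure_univ]).aemeasurable
  have hlaw : ∀ i, μ.map (X i) = uniformOn Set.univ := fun i => Measure.ext_of_singleton fun p => by
    rw [Measure.map_apply₀ (hX i) (measurableSet_singleton p).nullMeasurableSet, uniformOn_univ]
    exact (hunif i p).trans (by simp)
  have hjoint : μ.map (fun ω i => X i ω) = Measure.infinitePi fun _ => uniformOn Set.univ := by
    rw [hindep.map_fun_eq_infinitePi_map₀' hX]
    simp_rw [hlaw]
  rw [← integral_map (aemeasurable_pi_lambda _ hX) F.measurable_outcomeVal.aestronglyMeasurable,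
    hjoint]
  refine le_trans ?_ F.card_div_le_integral_outcomeVal
  rw [mul_div_assoc,
    show (Fintype.card V : ℝ) / (8 * #F.roots) = 1 / 8 * (Fintype.card V / #F.roots) by ring]
  exact mul_le_mul_of_nonneg_right (by norm_num) (by positivity)
end
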